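/- For every t ∈ ℤ the series φ(t) := Σ_{k=0}^∞ α^k Π(t,k)ᵀ G(t−k) converges absolutely, and the resulting two-sided sequence satisfies the stationary eligibility recursion φ(t) = α A(t)ᵀ φ(t−1) + G(t) for every t ∈ ℤ. -/

import Mathlib

/-!
Peeling off the `k = 0` term of the series leaves `G t`, and since
`Π(t,k+1) = Π(t-1,k) A(t)`, every remaining term is `α A(t)ᵀ` times the corresponding term of
the series at `t - 1`. Absolute convergence comes from `‖Π(t,k)ᵀ G(t-k)‖ ≤ ‖Π(t,k)‖ ‖G(t-k)‖`,
the operator norm being invariant under transposition, and it lets `A(t)ᵀ` pass through the sum.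
-/

open Matrix
open scoped Matrix.Norms.L2Operator

/-- The backward product `Π(t,k) = A(t−k+1) A(t−k+2) ⋯ A(t)`, with `Π(t,0) = I`. -/
noncomputable def prodA {d : ℕ} (A : ℤ → Matrix (Fin d) (Fin d) ℝ) (t : ℤ) :
    ℕ → Matrix (Fin d) (Fin d) ℝ
  | 0 => 1
  | k + 1 => A (t - k) * prodA A t k

theorem HasSum.matrix_mul_left {X l m n R : Type*} [Fintype n] [NonUnitalNonAssocSemiring R]
    [TopologicalSpace R] [IsTopologicalSemiring R] {f : X → Matrix n l R} {a : Matrix n l R}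
    (M : Matrix m n R) (hf : HasSum f a) : HasSum (fun x => M * f x) (M * a) :=
  hf.map (addMonoidHomMulLeft M) (continuous_const.matrix_mul continuous_id)

theorem Matrix.tsum_mul_left {X l m n R : Type*} [Fintype n] [NonUnitalNonAssocSemiring R]
    [TopologicalSpace R] [IsTopologicalSemiring R] [T2Space R] {f : X → Matrix n l R}
    (M : Matrix m n R) (hf : Summable f) : ∑' x, M * f x = M * ∑' x, f x :=
  (hf.hasSum.matrix_mul_left M).tsum_eq

theorem Matrix.l2_opNorm_transpose {m n : Type*} [Fintype m] [Fintype n]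
    [DecidableEq m] [DecidableEq n] (M : Matrix m n ℝ) : ‖Mᵀ‖ = ‖M‖ := by
  rw [← conjTranspose_eq_transpose_of_trivial, l2_opNorm_conjTranspose]

theorem prodA_succ {d : ℕ} (A : ℤ → Matrix (Fin d) (Fin d) ℝ) (t : ℤ) (k : ℕ) :
    prodA A t (k + 1) = prodA A (t - 1) k * A t := by
  induction k with
  | zero => simp [prodA]
  | succ k ih =>
    change A (t - (k + 1 : ℕ)) * prodA A t (k + 1) = A (t - 1 - k) * prodA A (t - 1) k * A t
    rw [ih, Matrix.mul_assoc]
    congr 2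
    push_cast
    ring

section Eligibility

variable {d ℓ : ℕ} (α : ℝ) (A : ℤ → Matrix (Fin d) (Fin d) ℝ) (G : ℤ → Matrix (Fin d) (Fin ℓ) ℝ)

noncomputable def eligibilityTerm (t : ℤ) (k : ℕ) : Matrix (Fin d) (Fin ℓ) ℝ :=
  α ^ k • ((prodA A t k)ᵀ * G (t - k))

theorem eligibilityTerm_zero (t : ℤ) : eligibilityTerm α A G t 0 = G t := by
  simp [eligibilityTerm, prodA]

theorem eligibilityTerm_succ (t : ℤ) (k : ℕ) :
    eligibilityTerm α A G t (k + 1) = α • ((A t)ᵀ * eligibilityTerm α A G (t - 1) k) := by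
  have hshift : t - ((k + 1 : ℕ) : ℤ) = t - 1 - k := by push_cast; ring
  rw [eligibilityTerm, eligibilityTerm, prodA_succ, transpose_mul, hshift, Matrix.mul_smul,
    Matrix.mul_assoc, smul_smul, pow_succ']

theorem norm_eligibilityTerm_le (t : ℤ) (k : ℕ) :
    ‖eligibilityTerm α A G t k‖ ≤ |α| ^ k * ‖prodA A t k‖ * ‖G (t - k)‖ := by
  rw [eligibilityTerm, norm_smul, norm_pow, Real.norm_eq_abs, mul_assoc,
    ← l2_opNorm_transpose (prodA A t k)]
  gcongr
  exact l2_opNorm_mul _ _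

variable {α A G}

theorem summable_norm_eligibilityTerm {t : ℤ}
    (habs : Summable fun k : ℕ => |α| ^ k * ‖prodA A t k‖ * ‖G (t - k)‖) :
    Summable fun k => ‖eligibilityTerm α A G t k‖ :=
  habs.of_nonneg_of_le (fun _ => norm_nonneg _) (norm_eligibilityTerm_le α A G t)

theorem tsum_eligibilityTerm_eq {t : ℤ}
    (habs : Summable fun k : ℕ => |α| ^ k * ‖prodA A (t - 1) k‖ * ‖G (t - 1 - k)‖) :
    ∑' k, eligibilityTerm α A G t k
      = α • ((A t)ᵀ * ∑' k, eligibilityTerm α A G (t - 1) k) + G t := by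
  have hprev : Summable (eligibilityTerm α A G (t - 1)) :=
    (summable_norm_eligibilityTerm habs).of_norm
  have htail : Summable fun k => eligibilityTerm α A G t (k + 1) := by
    simp only [eligibilityTerm_succ]
    exact (hprev.hasSum.matrix_mul_left (A t)ᵀ).summable.const_smul α
  rw [tsum_eq_zero_add' htail, eligibilityTerm_zero, add_comm]
  simp only [eligibilityTerm_succ, tsum_const_smul'', Matrix.tsum_mul_left _ hprev]

end Eligibility

/-- For every `t ∈ ℤ` the series `φ(t) = ∑_k α^k Π(t,k)ᵀ G(t−k)` converges
absolutely (in operator norm), and the resulting two-sided sequence satisfies the stationary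
eligibility recursion `φ(t) = α A(t)ᵀ φ(t−1) + G(t)`. -/
theorem stationary_eligibility_vector_recursion
    (d ℓ : ℕ) (α : ℝ)
    (A : ℤ → Matrix (Fin d) (Fin d) ℝ) (G : ℤ → Matrix (Fin d) (Fin ℓ) ℝ)
    (habs : ∀ t : ℤ, Summable fun k : ℕ => |α| ^ k * ‖prodA A t k‖ * ‖G (t - k)‖) :
    (∀ t : ℤ, Summable fun k : ℕ => ‖α ^ k • ((prodA A t k)ᵀ * G (t - k))‖) ∧
    ∀ t : ℤ, (∑' k : ℕ, α ^ k • ((prodA A t k)ᵀ * G (t - k)))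
      = α • ((A t)ᵀ * ∑' k : ℕ, α ^ k • ((prodA A (t - 1) k)ᵀ * G (t - 1 - k))) + G t :=
  ⟨fun t => summable_norm_eligibilityTerm (habs t),
    fun t => tsum_eligibilityTerm_eq (habs (t - 1))⟩
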